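/- Let θ = (θᵢⱼ) be a 2n×m matrix of independent Grassmann generators of Λ_{2mn}, and θ̂ = θᵀJ. Then for all 1 ≤ i ≤ 2n and 1 ≤ j ≤ m, the (left) Grassmann partial derivative satisfies ∂_{θᵢⱼ} det(I_m − θ̂θ) = 2 ((I_m − θ̂θ)^{-1} θ̂)_{ji} · det(I_m − θ̂θ). -/

import Mathlib

noncomputable section

open Matrix

/-- The standard symplectic matrix `J = [[0, Iₙ],[-Iₙ, 0]]`, with entries in `Λ`. -/
def sympJ (n : ℕ) (Λ : Type*) [Ring Λ] :
    Matrix (Fin n ⊕ Fin n) (Fin n ⊕ Fin n) Λ :=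
  Matrix.fromBlocks 0 1 (-1) 0

/-- The determinant of a square matrix over a (possibly noncommutative) ring,
via the Leibniz formula with ordered products.  For matrices whose entries
pairwise commute (such as even elements of a Grassmann algebra) this is the
usual determinant. -/
def ncDet {m : ℕ} {Λ : Type*} [Ring Λ] (M : Matrix (Fin m) (Fin m) Λ) : Λ :=
  ∑ σ : Equiv.Perm (Fin m),
    (Equiv.Perm.sign σ : ℤ) • ((List.finRange m).map fun i => M (σ i) i).prod

/-! Let `∂ = ∂_{θᵢⱼ}`. The central elements `x` along which `∂` obeys the even Leibniz rule
`∂(xu) = (∂x)u + x∂u` form a commutative subring `G`, on which `∂` is a derivation `G → Λ`. Every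
product `θ_{ab}θ_{cd}` lies in `G` and squares to zero, so `N = θ̂θ` is a matrix over `G` with
nilpotent entries: `1 - N` is invertible over `G`, and `ncDet` is the usual determinant there.
Jacobi's formula `∂ det A = Σ adj(A)_{ka} ∂A_{ak}` applies; as
`∂(1 - N)_{ab} = δ_{aj}θ̂_{bi} + δ_{bj}θ̂_{ai}` and `1 - N` is symmetric (`J` is antisymmetric and
the `θ`'s anticommute), its two halves agree, giving
`2 (adj(1 - N) θ̂)_{ji} = 2 ((1 - N)⁻¹ θ̂)_{ji} det(1 - N)`. -/

namespace Matrix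

variable {α n : Type*} [CommRing α] [Fintype n] [DecidableEq n]

theorem adjugate_apply_eq_det_updateCol (A : Matrix n n α) (k a : n) :
    adjugate A k a = (A.updateCol k (Pi.single a 1)).det := by
  rw [← transpose_apply (adjugate A), adjugate_transpose, adjugate_def, of_apply, cramer_apply,
    transpose_transpose]

theorem prod_updateCol_single_apply (A : Matrix n n α) (σ : Equiv.Perm n) (k a : n) :
    ∏ i, A.updateCol k (Pi.single a 1) (σ i) i
      = if σ k = a then ∏ i ∈ Finset.univ.erase k, A (σ i) i else 0 := by
  rw [← Finset.mul_prod_erase _ _ (Finset.mem_univ k), updateCol_self, Pi.single_apply,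
    Finset.prod_congr rfl fun i hi => updateCol_ne (Finset.ne_of_mem_erase hi)]
  split_ifs <;> simp

theorem isUnit_det_one_sub_of_isNilpotent (N : Matrix n n α) (hN : ∀ a b, IsNilpotent (N a b)) :
    IsUnit (1 - N).det := by
  have hmk : (Ideal.Quotient.mk (nilradical α)).mapMatrix N = 0 := by
    ext a b
    exact Ideal.Quotient.eq_zero_iff_mem.mpr (mem_nilradical.mpr (hN a b))
  have hsub : (1 - N).det - 1 ∈ nilradical α := by
    rw [← Ideal.Quotient.eq_zero_iff_mem, map_sub, RingHom.map_det, map_sub, hmk]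
    simp
  simpa using (mem_nilradical.mp hsub).isUnit_add_right_of_commute isUnit_one (Commute.all _ _)

theorem map_ringInverse_mul_apply_mul_map_det {Λ p : Type*} [Ring Λ] (f : α →+* Λ)
    (hf : ∀ x c, Commute (f x) c) {A : Matrix n n α}
    (hA : IsUnit A.det) (B : Matrix n p Λ) (j : n) (i : p) :
    ((Ring.inverse A).map f * B) j i * f A.det = ∑ a, f (adjugate A j a) * B a i := by
  rw [← nonsing_inv_eq_ringInverse, inv_def, mul_apply, Finset.sum_mul]
  refine Finset.sum_congr rfl fun a _ => ?_
  rw [map_apply, smul_apply, smul_eq_mul, mul_assoc, ← (hf A.det (B a i)).eq, ← mul_assoc,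
    ← map_mul, mul_right_comm, Ring.inverse_mul_cancel _ hA, one_mul]

end Matrix

theorem map_ringInverse {M₀ N₀ F : Type*} [MonoidWithZero M₀] [MonoidWithZero N₀] [FunLike F M₀ N₀]
    [MonoidHomClass F M₀ N₀] (f : F) {x : M₀} (hx : IsUnit x) :
    f (Ring.inverse x) = Ring.inverse (f x) := by
  rw [← Ring.inverse_mul_cancel_left _ (f (Ring.inverse x)) (hx.map f), ← map_mul,
    Ring.mul_inverse_cancel _ hx, map_one, mul_one]

namespace Derivation

variable {R S M : Type*} [CommRing R] [CommRing S] [AddCommGroup M] [Algebra R S] [Module S M]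
  [Module R M] (D : Derivation R S M)

theorem leibniz_prod {ι : Type*} [DecidableEq ι] (s : Finset ι) (f : ι → S) :
    D (∏ i ∈ s, f i) = ∑ i ∈ s, (∏ j ∈ s.erase i, f j) • D (f i) := by
  induction s using Finset.induction_on with
  | empty => simp
  | insert a s ha ih =>
    rw [Finset.prod_insert ha, leibniz, ih, Finset.sum_insert ha, Finset.erase_insert ha,
      Finset.smul_sum, add_comm]
    congr 1
    refine Finset.sum_congr rfl fun i hi => ?_
    rw [Finset.erase_insert_of_ne (ne_of_mem_of_not_mem hi ha).symm,
      Finset.prod_insert fun h => ha (Finset.mem_of_mem_erase h), mul_smul]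

theorem map_det {n : Type*} [Fintype n] [DecidableEq n] (A : Matrix n n S) :
    D A.det = ∑ k, ∑ a, adjugate A k a • D (A a k) := by
  simp_rw [adjugate_apply_eq_det_updateCol, det_apply, prod_updateCol_single_apply, Finset.sum_smul,
    map_sum, Units.smul_def, map_zsmul, leibniz_prod, Finset.smul_sum]
  rw [Finset.sum_comm]
  refine Finset.sum_congr rfl fun k _ => ?_
  rw [Finset.sum_comm]
  refine Finset.sum_congr rfl fun σ _ => ?_
  simp only [smul_ite, ite_smul, zero_smul, smul_zero, Finset.sum_ite_eq, Finset.mem_univ, if_true]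
  rw [smul_assoc]

theorem map_det_of_isSymm {n : Type*} [Fintype n] [DecidableEq n] {A : Matrix n n S}
    (hA : A.IsSymm) (j : n) (v : n → M)
    (hDA : ∀ a b, D (A a b) = (if a = j then v b else 0) + if b = j then v a else 0) :
    D A.det = 2 • ∑ a, adjugate A j a • v a := by
  simp only [map_det, hDA, smul_add, smul_ite, smul_zero, Finset.sum_add_distrib,
    Finset.sum_ite_eq', Finset.sum_ite_irrel, Finset.sum_const_zero, Finset.mem_univ, if_true,
    hA.adjugate.apply j]
  exact (two_nsmul _).symm

end Derivation

theorem ncDet_map {R Λ : Type*} [CommRing R] [Ring Λ] {m : ℕ} (f : R →+* Λ)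
    (A : Matrix (Fin m) (Fin m) R) :
    ncDet (A.map f) = f A.det := by
  simp only [ncDet, det_apply, map_sum, Units.smul_def, map_zsmul, Fin.prod_univ_def,
    map_list_prod, List.map_map]
  rfl

theorem sympJ_map {R S : Type*} [Ring R] [Ring S] (f : R →+* S) (n : ℕ) :
    (sympJ n R).map f = sympJ n S := by
  simp [sympJ, fromBlocks_map, Matrix.map_neg]

theorem sympJ_transpose (n : ℕ) (R : Type*) [Ring R] : (sympJ n R)ᵀ = -sympJ n R := by
  simp [sympJ, fromBlocks_transpose, fromBlocks_neg]

section CentralLeibniz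

variable {Λ : Type*} [Ring Λ] (E : Λ →+ Λ) (hE1 : E 1 = 0)

def centralLeibnizSubring : Subring Λ where
  carrier := {x | (∀ c, Commute x c) ∧ ∀ u, E (x * u) = E x * u + x * E u}
  one_mem' := ⟨Commute.one_left, fun u => by simp [hE1]⟩
  zero_mem' := ⟨Commute.zero_left, fun u => by simp⟩
  add_mem' := fun hx hy => ⟨fun c => (hx.1 c).add_left (hy.1 c), fun u => by
    simp only [add_mul, map_add, hx.2 u, hy.2 u]
    abel⟩
  neg_mem' := fun hx => ⟨fun c => (hx.1 c).neg_left, fun u => by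
    simp only [neg_mul, map_neg, hx.2 u, neg_add]⟩
  mul_mem' := fun {x y} hx hy => ⟨fun c => (hx.1 c).mul_left (hy.1 c), fun u => by
    rw [mul_assoc, hx.2, hy.2, hx.2 y]
    noncomm_ring⟩

variable {E hE1}

theorem mem_centralLeibnizSubring_of_forall {x f : Λ} (hx : ∀ c, Commute x c)
    (hf : ∀ u, E (x * u) = f * u + x * E u) : x ∈ centralLeibnizSubring E hE1 := by
  have hfx : f = E x := by simpa [hE1] using (hf 1).symm
  exact ⟨hx, hfx ▸ hf⟩

instance : CommRing (centralLeibnizSubring E hE1) :=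
  { (inferInstance : Ring (centralLeibnizSubring E hE1)) with
    mul_comm := fun x y => Subtype.ext (x.2.1 y) }

variable (E hE1)

def centralLeibnizSubring.derivation : Derivation ℤ (centralLeibnizSubring E hE1) Λ where
  toFun x := E x
  map_add' x y := map_add E (x : Λ) y
  map_smul' n x := map_zsmul E n (x : Λ)
  map_one_eq_zero' := hE1
  leibniz' x y := by
    change E (x * y) = x * E y + y * E x
    rw [x.2.2, (y.2.1 _).eq, add_comm]

theorem centralLeibnizSubring.derivation_apply (x : centralLeibnizSubring E hE1) :
    centralLeibnizSubring.derivation E hE1 x = E (x : Λ) := rfl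

end CentralLeibniz

section Grassmann

variable {Λ : Type*} [Ring Λ] {ι κ : Type*} [Fintype ι] (θ : Matrix ι κ Λ)

theorem transpose_mul_intCast_apply (C : Matrix ι ι ℤ) (a : κ) (b : ι) :
    (θᵀ * C.map (Int.cast : ℤ → Λ)) a b = ∑ l, C l b • θ l a := by
  simp only [mul_apply, transpose_apply, map_apply, ← Int.cast_comm, zsmul_eq_mul]

theorem transpose_mul_intCast_mul_apply (C : Matrix ι ι ℤ) (a b : κ) :
    (θᵀ * C.map (Int.cast : ℤ → Λ) * θ) a b = ∑ l, ∑ k, C l k • (θ l a * θ k b) := by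
  rw [mul_apply]
  simp_rw [transpose_mul_intCast_apply, Finset.sum_mul, smul_mul_assoc]
  exact Finset.sum_comm

variable {θ} (hodd : ∀ i j k l, θ i j * θ k l = -(θ k l * θ i j))
include hodd

theorem isSymm_transpose_mul_intCast_mul {C : Matrix ι ι ℤ} (hC : Cᵀ = -C) :
    (θᵀ * C.map (Int.cast : ℤ → Λ) * θ).IsSymm := by
  refine IsSymm.ext fun a b => ?_
  rw [transpose_mul_intCast_mul_apply, transpose_mul_intCast_mul_apply, Finset.sum_comm]
  refine Finset.sum_congr rfl fun l _ => Finset.sum_congr rfl fun k _ => ?_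
  have hCkl : C k l = -C l k := by simpa using congrFun₂ hC l k
  rw [hodd, hCkl, neg_smul, smul_neg, neg_neg]

theorem isNilpotent_transpose_mul_intCast_mul_apply [IsAddTorsionFree Λ]
    (hcent : ∀ i j k l (c : Λ), Commute (θ i j * θ k l) c) (C : Matrix ι ι ℤ) (a b : κ) :
    IsNilpotent ((θᵀ * C.map (Int.cast : ℤ → Λ) * θ) a b) := by
  have hsq : ∀ k l, θ k l * θ k l = 0 := fun k l => self_eq_neg.mp (hodd k l k l)
  rw [transpose_mul_intCast_mul_apply, ← Finset.sum_product']
  refine Commute.isNilpotent_sum (fun p _ => ⟨2, ?_⟩) fun p q _ _ => (hcent _ _ _ _ _).smul_left _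
  rw [smul_pow, sq (θ p.1 a * _), mul_assoc, ← mul_assoc (θ p.2 b), hodd p.2 b]
  simp only [neg_mul, mul_neg, ← mul_assoc, hsq, zero_mul, neg_zero, smul_zero]

end Grassmann

section Derivative

variable {Λ : Type*} [Ring Λ] {ι κ : Type*} [DecidableEq ι] [DecidableEq κ]
  {θ : Matrix ι κ Λ} {E : Λ →+ Λ} (hE1 : E 1 = 0) {i : ι} {j : κ}
  (hEθ : ∀ k l u, E (θ k l * u) = (if k = i ∧ l = j then u else 0) - θ k l * E u)
include hE1 hEθ

theorem map_entry_eq_ite (k : ι) (l : κ) : E (θ k l) = if k = i ∧ l = j then 1 else 0 := by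
  simpa [hE1] using hEθ k l 1

theorem mul_mem_centralLeibnizSubring (hcent : ∀ i j k l (c : Λ), Commute (θ i j * θ k l) c)
    (a : ι) (b : κ) (c : ι) (d : κ) : θ a b * θ c d ∈ centralLeibnizSubring E hE1 := by
  -- the two sign changes of the odd Leibniz rule cancel
  refine mem_centralLeibnizSubring_of_forall (hcent a b c d)
    (f := (if a = i ∧ b = j then θ c d else 0) - if c = i ∧ d = j then θ a b else 0) fun u => ?_
  rw [mul_assoc, hEθ, hEθ]
  split_ifs <;> noncomm_ring

theorem map_one_sub_transpose_mul_intCast_mul_apply [Fintype ι] {C : Matrix ι ι ℤ} (hC : Cᵀ = -C)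
    (a b : κ) :
    E ((1 - θᵀ * C.map (Int.cast : ℤ → Λ) * θ : Matrix κ κ Λ) a b) =
      (if a = j then (θᵀ * C.map (Int.cast : ℤ → Λ)) b i else 0) +
        if b = j then (θᵀ * C.map (Int.cast : ℤ → Λ)) a i else 0 := by
  have hCik : ∀ k, C i k = -C k i := fun k => by simpa using congrFun₂ hC k i
  have hone : E ((1 : Matrix κ κ Λ) a b) = 0 := by
    rw [one_apply]
    split_ifs
    exacts [hE1, map_zero E]
  rw [Matrix.sub_apply, map_sub, hone, zero_sub, transpose_mul_intCast_mul_apply]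
  simp only [map_sum, map_zsmul, hEθ, map_entry_eq_ite hE1 hEθ, transpose_mul_intCast_apply,
    smul_sub, Finset.sum_sub_distrib, ite_and, mul_ite, mul_one, mul_zero, smul_ite, smul_zero]
  by_cases ha : a = j <;> by_cases hb : b = j <;> simp [ha, hb, hCik]

end Derivative

theorem map_ncDet_one_sub_transpose_mul_intCast_mul {Λ : Type*} [Ring Λ] [IsAddTorsionFree Λ]
    {ι : Type*} [Fintype ι] [DecidableEq ι] {m : ℕ} {θ : Matrix ι (Fin m) Λ}
    (hodd : ∀ i j k l, θ i j * θ k l = -(θ k l * θ i j))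
    (hcent : ∀ i j k l (c : Λ), Commute (θ i j * θ k l) c) {C : Matrix ι ι ℤ} (hC : Cᵀ = -C)
    {E : Λ →+ Λ} (hE1 : E 1 = 0) {i : ι} {j : Fin m}
    (hEθ : ∀ k l u, E (θ k l * u) = (if k = i ∧ l = j then u else 0) - θ k l * E u) :
    E (ncDet (1 - θᵀ * C.map (Int.cast : ℤ → Λ) * θ)) =
      2 • ((Ring.inverse (1 - θᵀ * C.map (Int.cast : ℤ → Λ) * θ) *
          (θᵀ * C.map (Int.cast : ℤ → Λ)) : Matrix (Fin m) ι Λ) j i *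
        ncDet (1 - θᵀ * C.map (Int.cast : ℤ → Λ) * θ)) := by
  set G := centralLeibnizSubring E hE1
  set N := θᵀ * C.map (Int.cast : ℤ → Λ) * θ with hN
  have hmem : ∀ a b, N a b ∈ G := fun a b => by
    rw [hN, transpose_mul_intCast_mul_apply]
    exact sum_mem fun l _ => sum_mem fun k _ =>
      zsmul_mem (mul_mem_centralLeibnizSubring hE1 hEθ hcent l a k b) _
  let NG : Matrix (Fin m) (Fin m) G := of fun a b => ⟨N a b, hmem a b⟩
  have hmap : (1 - NG).map G.subtype = 1 - N := by
    ext a b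
    by_cases hab : a = b <;> simp [NG, one_apply, hab]
  have hunit : IsUnit (1 - NG).det := isUnit_det_one_sub_of_isNilpotent NG fun a b =>
    (IsNilpotent.map_iff (f := G.subtype) Subtype.val_injective).mp
      (isNilpotent_transpose_mul_intCast_mul_apply hodd hcent C a b)
  have hsymm : (1 - NG).IsSymm := isSymm_one.sub <| IsSymm.ext fun a b =>
    Subtype.ext ((isSymm_transpose_mul_intCast_mul hodd hC).apply a b)
  have hderiv : ∀ a b, centralLeibnizSubring.derivation E hE1 ((1 - NG) a b) =
      (if a = j then (θᵀ * C.map (Int.cast : ℤ → Λ)) b i else 0) +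
        if b = j then (θᵀ * C.map (Int.cast : ℤ → Λ)) a i else 0 := fun a b => by
    rw [centralLeibnizSubring.derivation_apply,
      ← map_one_sub_transpose_mul_intCast_mul_apply hE1 hEθ hC]
    exact congrArg E (congrFun₂ hmap a b)
  rw [← hmap, ncDet_map, ← RingHom.mapMatrix_apply,
    ← map_ringInverse _ ((isUnit_iff_isUnit_det _).mpr hunit), RingHom.mapMatrix_apply,
    map_ringInverse_mul_apply_mul_map_det _ (fun x c => x.2.1 c) hunit]
  change centralLeibnizSubring.derivation E hE1 (1 - NG).det = _
  rw [Derivation.map_det_of_isSymm _ hsymm j _ hderiv]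
  rfl

/-- in the Grassmann algebra generated by the `θᵢⱼ` (odd,
anticommuting, with even products central), the left Grassmann partial
derivatives `D i j = ∂_{θᵢⱼ}` (characterized by `∂(1) = 0` and the odd Leibniz
rule `∂(θ_{kl}·u) = δ·u − θ_{kl}·∂u`) satisfy
`∂_{θᵢⱼ} det(I − θ̂θ) = 2 ((I − θ̂θ)⁻¹ θ̂)_{ji} · det(I − θ̂θ)`. -/
theorem grassmann_deriv_det (m n : ℕ) (Λ : Type*) [Ring Λ] [Algebra ℝ Λ]
    (θ : Matrix (Fin n ⊕ Fin n) (Fin m) Λ)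
    (hodd : ∀ i j k l, θ i j * θ k l = -(θ k l * θ i j))
    (hcent : ∀ i j k l (c : Λ), Commute (θ i j * θ k l) c)
    (D : (Fin n ⊕ Fin n) → Fin m → Module.End ℝ Λ)
    (hD1 : ∀ i j, D i j 1 = 0)
    (hDθ : ∀ i j k l (u : Λ),
      D i j (θ k l * u) = (if k = i ∧ l = j then u else 0) - θ k l * D i j u)
    (i : Fin n ⊕ Fin n) (j : Fin m) :
    D i j (ncDet (1 - θᵀ * sympJ n Λ * θ)) =
      (2 : ℝ) • (((Ring.inverse (1 - θᵀ * sympJ n Λ * θ) * (θᵀ * sympJ n Λ) :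
          Matrix (Fin m) (Fin n ⊕ Fin n) Λ)) j i
        * ncDet (1 - θᵀ * sympJ n Λ * θ)) := by
  have : IsAddTorsionFree Λ := .of_isTorsionFree ℝ Λ
  have hJ : sympJ n Λ = (sympJ n ℤ).map (Int.cast : ℤ → Λ) :=
    (sympJ_map (Int.castRingHom Λ) n).symm
  rw [hJ, two_smul, ← two_nsmul]
  exact map_ncDet_one_sub_transpose_mul_intCast_mul hodd hcent (sympJ_transpose n ℤ)
    (E := (D i j).toAddMonoidHom) (hD1 i j) (hDθ i j)
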